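/- arXiv:math/0402196 — 3 statements merged into one kernel-verified Lean document; each statement's English description precedes it below -/
import Mathlib

section
/- Let σ̌ ⊂ ℝ² be a two-dimensional strongly convex rational cone with dual lattice M = ℤ², let Ǧ be the minimal generating set of the semigroup σ̌ ∩ M, and let ν be a lattice point in the interior of the dual cone σ. Then there exist μ₁, μ₂ ∈ Ǧ forming a ℤ-basis of M such that ⟨μ, ν⟩ ≥ ⟨μᵢ, ν⟩ for every μ ∈ Ǧ \ {μ₁, μ₂} and i = 1, 2. -/
/-!
Let `μ₁` minimise `⟨·, ν⟩` on `S \ {0}`, and `μ₂` minimise it on the points of `S` off the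
line `ℝ μ₁`, ties broken by `|det (μ₁, ·)|`. Both are indecomposable in `S`, so they lie in every
generating set; `μ₁` is primitive, so no other generator lies on `ℝ μ₁`, and the inequalities are
just the two minimality properties. If `d = |det (μ₁, μ₂)| > 1`, the parallelogram spanned by
`μ₁, μ₂` contains a lattice point `x = (r μ₁ + s μ₂) / d ≠ 0` with `0 ≤ r, s < d`. For `s = 0`
this contradicts the minimality of `μ₁`. For `s > 0` both `x` and `μ₁ + μ₂ - x` lie off `ℝ μ₁`
and their pairings with `ν` add up to `⟨μ₁, ν⟩ + ⟨μ₂, ν⟩ ≤ 2 ⟨μ₂, ν⟩`, so `⟨x, ν⟩ ≤ ⟨μ₂, ν⟩`;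
equality is excluded by the tie-break, as `|det (μ₁, x)| = s < d`.
-/

/-- The standard pairing `M × N → ℤ` on `ℤ² × ℤ²`. -/
def pair2 (m n : ℤ × ℤ) : ℤ := m.1 * n.1 + m.2 * n.2

/-- `m` is a nonnegative integer combination of elements of `G`. -/
def genBy (G : Finset (ℤ × ℤ)) (m : ℤ × ℤ) : Prop :=
  ∃ f : (ℤ × ℤ) → ℕ, m = ∑ g ∈ G, (f g : ℤ) • g

def det2 (u v : ℤ × ℤ) : ℤ := u.1 * v.2 - u.2 * v.1

section Bilinear

variable (a b u v ν : ℤ × ℤ) (k : ℤ)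

@[simp] theorem pair2_add : pair2 (a + b) ν = pair2 a ν + pair2 b ν := by
  simp only [pair2, Prod.fst_add, Prod.snd_add]; ring

@[simp] theorem pair2_sub : pair2 (a - b) ν = pair2 a ν - pair2 b ν := by
  simp only [pair2, Prod.fst_sub, Prod.snd_sub]; ring

@[simp] theorem pair2_smul : pair2 (k • a) ν = k * pair2 a ν := by
  simp only [pair2, Prod.smul_fst, Prod.smul_snd, smul_eq_mul]; ring

@[simp] theorem det2_add_right : det2 u (a + b) = det2 u a + det2 u b := by
  simp only [det2, Prod.fst_add, Prod.snd_add]; ring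

@[simp] theorem det2_smul_right : det2 u (k • a) = k * det2 u a := by
  simp only [det2, Prod.smul_fst, Prod.smul_snd, smul_eq_mul]; ring

@[simp] theorem det2_self : det2 u u = 0 := by
  simp only [det2]; ring

theorem det2_smul_eq_add_smul : det2 u v • a = det2 a v • u + det2 u a • v := by
  ext <;> simp only [det2, Prod.smul_fst, Prod.smul_snd, Prod.fst_add, Prod.snd_add,
    smul_eq_mul] <;> ring

end Bilinear

theorem eq_zero_of_det2_eq_zero {u w₁ w₂ : ℤ × ℤ} (hw : det2 w₁ w₂ ≠ 0)
    (h₁ : det2 u w₁ = 0) (h₂ : det2 u w₂ = 0) : u = 0 := by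
  unfold det2 at *
  ext
  · exact (mul_eq_zero.1 (by linear_combination w₁.1 * h₂ - w₂.1 * h₁ :
      u.1 * (w₁.1 * w₂.2 - w₁.2 * w₂.1) = 0)).resolve_right hw
  · exact (mul_eq_zero.1 (by linear_combination w₁.2 * h₂ - w₂.2 * h₁ :
      u.2 * (w₁.1 * w₂.2 - w₁.2 * w₂.1) = 0)).resolve_right hw

theorem exists_eq_smul_of_det2_eq_zero {u v : ℤ × ℤ} (hu : IsCoprime u.1 u.2)
    (h : det2 u v = 0) : ∃ k : ℤ, v = k • u := by
  obtain ⟨a, b, hab⟩ := hu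
  unfold det2 at h
  refine ⟨a * v.1 + b * v.2, Prod.ext ?_ ?_⟩
  · simp only [Prod.smul_fst, smul_eq_mul]; linear_combination (-v.1) * hab - b * h
  · simp only [Prod.smul_snd, smul_eq_mul]; linear_combination (-v.2) * hab + a * h

theorem exists_not_dvd_det2 {u v : ℤ × ℤ} (h : 1 < |det2 u v|) :
    ∃ z, ¬ (det2 u v ∣ det2 z v ∧ det2 u v ∣ det2 u z) := by
  by_contra! hdvd
  have h₁ := hdvd (1, 0)
  have h₂ := hdvd (0, 1)
  simp only [det2, one_mul, zero_mul, mul_one, mul_zero, sub_zero, zero_sub, dvd_neg] at h₁ h₂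
  have hD : det2 u v * det2 u v ∣ det2 u v * 1 := by
    simpa only [det2, mul_one] using dvd_sub (mul_dvd_mul h₂.2 h₁.1) (mul_dvd_mul h₁.2 h₂.1)
  have hD0 : det2 u v ≠ 0 := by rintro h0; simp [h0] at h
  rcases Int.isUnit_iff.1 (isUnit_of_dvd_one ((mul_dvd_mul_iff_left hD0).1 hD)) with h1 | h1 <;>
    simp [h1] at h

theorem exists_smul_eq_add_smul_of_one_lt_abs_det2 {u v : ℤ × ℤ} (h : 1 < |det2 u v|) :
    ∃ r s : ℤ, ∃ x : ℤ × ℤ, 0 ≤ r ∧ r < |det2 u v| ∧ 0 ≤ s ∧ s < |det2 u v| ∧ 0 < r + s ∧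
      |det2 u v| • x = r • u + s • v := by
  set d := |det2 u v|
  have hd : 0 < d := one_pos.trans h
  obtain ⟨z, hz⟩ := exists_not_dvd_det2 h
  obtain ⟨c, hc, hcd⟩ : ∃ c : ℤ, (c = 1 ∨ c = -1) ∧ c * det2 u v = d := by
    rcases abs_choice (det2 u v) with h' | h'
    · exact ⟨1, .inl rfl, by rw [one_mul]; exact h'.symm⟩
    · exact ⟨-1, .inr rfl, by rw [neg_one_mul]; exact h'.symm⟩
  set p := c * det2 z v
  set q := c * det2 u z
  have hcramer : d • z = p • u + q • v := by
    rw [← hcd, mul_smul, det2_smul_eq_add_smul, smul_add, smul_smul, smul_smul]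
  have hpq : ¬ (d ∣ p ∧ d ∣ q) := by
    rcases hc with rfl | rfl <;> simpa [p, q, d, abs_dvd] using hz
  have e₁ := Int.mul_ediv_add_emod p d
  have e₂ := Int.mul_ediv_add_emod q d
  refine ⟨p % d, q % d, z - (p / d) • u - (q / d) • v, Int.emod_nonneg _ hd.ne',
    Int.emod_lt_of_pos _ hd, Int.emod_nonneg _ hd.ne', Int.emod_lt_of_pos _ hd, ?_, ?_⟩
  · by_contra! hrs
    have hr : p % d = 0 := by linarith [Int.emod_nonneg p hd.ne', Int.emod_nonneg q hd.ne']
    have hs : q % d = 0 := by linarith [Int.emod_nonneg p hd.ne', Int.emod_nonneg q hd.ne']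
    exact hpq ⟨Int.dvd_of_emod_eq_zero hr, Int.dvd_of_emod_eq_zero hs⟩
  · linear_combination (norm := module) hcramer - e₁ • u - e₂ • v

theorem genBy_iff_mem_closure {G : Finset (ℤ × ℤ)} {m : ℤ × ℤ} :
    genBy G m ↔ m ∈ AddSubmonoid.closure (G : Set (ℤ × ℤ)) := by
  constructor
  · rintro ⟨f, rfl⟩
    exact AddSubmonoid.sum_mem _ fun g hg =>
      natCast_zsmul g (f g) ▸ AddSubmonoid.nsmul_mem _ (AddSubmonoid.subset_closure hg) _
  · rw [AddSubmonoid.mem_closure_finset]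
    rintro ⟨f, -, rfl⟩
    exact ⟨f, by simp only [natCast_zsmul]⟩

theorem notMem_closure_erase_of_minimal {S : Set (ℤ × ℤ)} {G : Finset (ℤ × ℤ)}
    (hgen : ∀ m ∈ S, genBy G m) (hmin : ∀ G' : Finset (ℤ × ℤ), G' ⊂ G → ∃ m ∈ S, ¬ genBy G' m)
    {g : ℤ × ℤ} (hg : g ∈ G) : g ∉ AddSubmonoid.closure ((G.erase g : Finset _) : Set (ℤ × ℤ)) := by
  intro hg'
  obtain ⟨m, hm, hnot⟩ := hmin _ (Finset.erase_ssubset hg)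
  have hle : AddSubmonoid.closure (G : Set (ℤ × ℤ)) ≤ AddSubmonoid.closure (G.erase g : Set _) := by
    refine AddSubmonoid.closure_le.2 fun x hx => ?_
    obtain rfl | hxg := eq_or_ne x g
    · exact hg'
    · exact AddSubmonoid.subset_closure (Finset.mem_erase.2 ⟨hxg, hx⟩)
  exact hnot (genBy_iff_mem_closure.2 (hle (genBy_iff_mem_closure.1 (hgen m hm))))

def IsIndecomposableIn {M : Type*} [AddMonoid M] (S : Set M) (m : M) : Prop :=
  m ≠ 0 ∧ ∀ a ∈ S, ∀ b ∈ S, a + b = m → a = 0 ∨ b = 0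

theorem IsIndecomposableIn.mono {M : Type*} [AddMonoid M] {S T : Set M} {m : M} (hST : S ⊆ T)
    (h : IsIndecomposableIn T m) : IsIndecomposableIn S m :=
  ⟨h.1, fun a ha b hb => h.2 a (hST ha) b (hST hb)⟩

theorem IsIndecomposableIn.mem_of_mem_closure {M : Type*} [AddMonoid M] {s : Set M} {m : M}
    (h : IsIndecomposableIn (AddSubmonoid.closure s) m) (hm : m ∈ AddSubmonoid.closure s) :
    m ∈ s := by
  induction hm using AddSubmonoid.closure_induction with
  | mem x hx => exact hx
  | zero => exact absurd rfl h.1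
  | add a b ha hb iha ihb =>
    rcases h.2 a ha b hb rfl with rfl | rfl
    · rw [zero_add] at h ⊢; exact ihb h
    · rw [add_zero] at h ⊢; exact iha h

theorem exists_isMinOn_int {α : Type*} {s : Set α} (f : α → ℤ) (hs : s.Nonempty)
    (hf : BddBelow (f '' s)) : ∃ a ∈ s, IsMinOn f s a := by
  obtain ⟨a, ha, hfa⟩ := Int.csInf_mem (hs.image f) hf
  exact ⟨a, ha, isMinOn_iff.2 fun x hx => hfa ▸ csInf_le hf (Set.mem_image_of_mem f hx)⟩

theorem exists_isMinOn_isMinOn_int {α : Type*} {s : Set α} (f g : α → ℤ) (hs : s.Nonempty)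
    (hf : BddBelow (f '' s)) (hg : BddBelow (g '' s)) :
    ∃ a ∈ s, IsMinOn f s a ∧ IsMinOn g {x ∈ s | f x = f a} a := by
  obtain ⟨a, ha, hfa⟩ := exists_isMinOn_int f hs hf
  obtain ⟨b, ⟨hb, hfb⟩, hgb⟩ := exists_isMinOn_int g (s := {x ∈ s | f x = f a}) ⟨a, ha, rfl⟩
    (hg.mono (Set.image_mono fun _ hx => hx.1))
  refine ⟨b, hb, isMinOn_iff.2 fun x hx => hfb ▸ isMinOn_iff.1 hfa x hx, ?_⟩
  simpa only [hfb] using hgb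

/-- The lattice points of a convex cone: closed under nonnegative rational combinations. -/
structure IsSaturatedCone (S : Set (ℤ × ℤ)) : Prop where
  zero_mem : (0 : ℤ × ℤ) ∈ S
  mem_of_smul_eq ⦃u v x : ℤ × ℤ⦄ ⦃r s t : ℤ⦄ : u ∈ S → v ∈ S → 0 ≤ r → 0 ≤ s → 0 < t →
    t • x = r • u + s • v → x ∈ S

namespace IsSaturatedCone

variable {S : Set (ℤ × ℤ)}

theorem add_mem (hS : IsSaturatedCone S) {u v : ℤ × ℤ} (hu : u ∈ S) (hv : v ∈ S) : u + v ∈ S :=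
  hS.mem_of_smul_eq hu hv zero_le_one zero_le_one one_pos (by simp only [one_smul])

theorem closure_subset (hS : IsSaturatedCone S) {G : Set (ℤ × ℤ)} (hGS : G ⊆ S) :
    (AddSubmonoid.closure G : Set (ℤ × ℤ)) ⊆ S :=
  fun _ hx => AddSubmonoid.closure_induction (fun _ hx => hGS hx) hS.zero_mem
    (fun _ _ _ _ hu hv => hS.add_mem hu hv) hx

end IsSaturatedCone

theorem isSaturatedCone_nonneg_span (w₁ w₂ : ℤ × ℤ) :
    IsSaturatedCone {m : ℤ × ℤ | ∃ a b : ℝ, 0 ≤ a ∧ 0 ≤ b ∧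
      (m.1 : ℝ) = a * w₁.1 + b * w₂.1 ∧ (m.2 : ℝ) = a * w₁.2 + b * w₂.2} where
  zero_mem := ⟨0, 0, le_rfl, le_rfl, by simp, by simp⟩
  mem_of_smul_eq := by
    rintro u v x r s t ⟨a₁, b₁, ha₁, hb₁, e₁, e₂⟩ ⟨a₂, b₂, ha₂, hb₂, e₃, e₄⟩ hr hs ht hx
    have hx₁ : (t : ℝ) * x.1 = r * u.1 + s * v.1 := by
      exact_mod_cast congrArg Prod.fst hx
    have hx₂ : (t : ℝ) * x.2 = r * u.2 + s * v.2 := by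
      exact_mod_cast congrArg Prod.snd hx
    have ht' : (0 : ℝ) < t := by exact_mod_cast ht
    refine ⟨(r * a₁ + s * a₂) / t, (r * b₁ + s * b₂) / t, by positivity, by positivity, ?_, ?_⟩
    · field_simp
      linear_combination hx₁ + (r : ℝ) * e₁ + (s : ℝ) * e₃
    · field_simp
      linear_combination hx₂ + (r : ℝ) * e₂ + (s : ℝ) * e₄

section MinimalPairing

variable {S : Set (ℤ × ℤ)} {ν μ₁ μ₂ : ℤ × ℤ}

theorem smul_ne_smul_of_isMinOn (hν : ∀ μ ∈ S, μ ≠ 0 → 0 < pair2 μ ν) (hμ₁ : μ₁ ∈ S \ {0})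
    (hmin : IsMinOn (pair2 · ν) (S \ {0}) μ₁) {x : ℤ × ℤ} (hx : x ∈ S) {r t : ℤ} (hr : 0 < r)
    (hrt : r < t) : t • x ≠ r • μ₁ := by
  intro h
  have hx0 : x ≠ 0 := by
    rintro rfl
    simp only [smul_zero] at h
    exact hμ₁.2 (smul_eq_zero.1 h.symm |>.resolve_left hr.ne')
  have hpair : t * pair2 x ν = r * pair2 μ₁ ν := by
    simpa only [pair2_smul] using congrArg (pair2 · ν) h
  have hle : pair2 μ₁ ν ≤ pair2 x ν := isMinOn_iff.1 hmin x ⟨hx, hx0⟩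
  nlinarith [hν μ₁ hμ₁.1 hμ₁.2]

theorem isCoprime_of_isMinOn (hS : IsSaturatedCone S) (hν : ∀ μ ∈ S, μ ≠ 0 → 0 < pair2 μ ν)
    (hμ₁ : μ₁ ∈ S \ {0}) (hmin : IsMinOn (pair2 · ν) (S \ {0}) μ₁) : IsCoprime μ₁.1 μ₁.2 := by
  rw [Int.isCoprime_iff_gcd_eq_one]
  set g : ℤ := (Int.gcd μ₁.1 μ₁.2 : ℤ)
  have hg : 0 < g := by
    refine Int.natCast_pos.2 (Nat.pos_of_ne_zero fun h => hμ₁.2 ?_)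
    obtain ⟨h₁, h₂⟩ := Int.gcd_eq_zero_iff.1 h
    exact Prod.ext h₁ h₂
  have hz : g • (μ₁.1 / g, μ₁.2 / g) = (1 : ℤ) • μ₁ + (0 : ℤ) • μ₁ := by
    ext
    · simp [g, Int.mul_ediv_cancel' (Int.gcd_dvd_left μ₁.1 μ₁.2)]
    · simp [g, Int.mul_ediv_cancel' (Int.gcd_dvd_right μ₁.1 μ₁.2)]
  have hzS := hS.mem_of_smul_eq hμ₁.1 hμ₁.1 zero_le_one le_rfl hg hz
  by_contra hg1
  exact smul_ne_smul_of_isMinOn hν hμ₁ hmin hzS one_pos (show 1 < g by omega)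
    (by simpa using hz)

theorem isIndecomposableIn_of_isMinOn (hν : ∀ μ ∈ S, μ ≠ 0 → 0 < pair2 μ ν)
    (hμ₁ : μ₁ ∈ S \ {0}) (hmin : IsMinOn (pair2 · ν) (S \ {0}) μ₁) :
    IsIndecomposableIn S μ₁ := by
  refine ⟨hμ₁.2, fun a ha b hb hab => ?_⟩
  by_contra! h
  have hsum : pair2 a ν + pair2 b ν = pair2 μ₁ ν := by rw [← pair2_add, hab]
  have ha' : pair2 μ₁ ν ≤ pair2 a ν := isMinOn_iff.1 hmin a ⟨ha, h.1⟩
  linarith [hν b hb h.2]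

theorem isIndecomposableIn_of_isMinOn_det2_ne_zero (hν : ∀ μ ∈ S, μ ≠ 0 → 0 < pair2 μ ν)
    (hμ₂ : μ₂ ∈ {μ ∈ S | det2 μ₁ μ ≠ 0})
    (hmin : IsMinOn (pair2 · ν) {μ ∈ S | det2 μ₁ μ ≠ 0} μ₂) : IsIndecomposableIn S μ₂ := by
  refine ⟨fun h => hμ₂.2 (by simp [h, det2]), fun a ha b hb hab => ?_⟩
  by_contra! h
  have hsum : pair2 a ν + pair2 b ν = pair2 μ₂ ν := by rw [← pair2_add, hab]
  have hdet : det2 μ₁ a + det2 μ₁ b = det2 μ₁ μ₂ := by rw [← det2_add_right, hab]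
  by_cases ha₀ : det2 μ₁ a = 0
  · have hb' : pair2 μ₂ ν ≤ pair2 b ν :=
      isMinOn_iff.1 hmin b ⟨hb, fun h0 => hμ₂.2 (by rw [← hdet, ha₀, h0, add_zero])⟩
    linarith [hν a ha h.1]
  · have ha' : pair2 μ₂ ν ≤ pair2 a ν := isMinOn_iff.1 hmin a ⟨ha, ha₀⟩
    linarith [hν b hb h.2]

theorem abs_det2_eq_one_of_isMinOn (hS : IsSaturatedCone S)
    (hν : ∀ μ ∈ S, μ ≠ 0 → 0 < pair2 μ ν)
    (hμ₁ : μ₁ ∈ S \ {0}) (hmin₁ : IsMinOn (pair2 · ν) (S \ {0}) μ₁)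
    (hμ₂ : μ₂ ∈ {μ ∈ S | det2 μ₁ μ ≠ 0})
    (hmin₂ : IsMinOn (pair2 · ν) {μ ∈ S | det2 μ₁ μ ≠ 0} μ₂)
    (htie : IsMinOn (|det2 μ₁ ·|)
      {μ ∈ {μ ∈ S | det2 μ₁ μ ≠ 0} | pair2 μ ν = pair2 μ₂ ν} μ₂) :
    |det2 μ₁ μ₂| = 1 := by
  obtain ⟨hμ₂S, hD⟩ := hμ₂
  by_contra hne
  obtain ⟨r, s, x, hr, hrd, hs, hsd, hrs, hx⟩ :=
    exists_smul_eq_add_smul_of_one_lt_abs_det2 ((Int.one_le_abs hD).lt_of_ne' hne)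
  set d := |det2 μ₁ μ₂|
  have hxS : x ∈ S := hS.mem_of_smul_eq hμ₁.1 hμ₂S hr hs (by omega) hx
  obtain rfl | hs := hs.eq_or_lt
  · exact smul_ne_smul_of_isMinOn hν hμ₁ hmin₁ hxS (by omega) hrd (by simpa using hx)
  have hdet : d * det2 μ₁ x = s * det2 μ₁ μ₂ := by
    simpa only [det2_smul_right, det2_add_right, det2_self, mul_zero, zero_add] using
      congrArg (det2 μ₁) hx
  have habs : |det2 μ₁ x| = s := by
    have := congrArg abs hdet
    rw [abs_mul, abs_mul, abs_of_pos hs, abs_of_pos (by omega : (0 : ℤ) < d), mul_comm] at this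
    exact mul_right_cancel₀ (by omega) this
  have hxD : det2 μ₁ x ≠ 0 := by rw [← abs_ne_zero, habs]; omega
  -- the reflection `x'` of `x` in the centre of the parallelogram spanned by `μ₁` and `μ₂`
  set x' := μ₁ + μ₂ - x
  have hx' : d • x' = (d - r) • μ₁ + (d - s) • μ₂ := by
    linear_combination (norm := module) -hx
  have hx'S : x' ∈ S := hS.mem_of_smul_eq hμ₁.1 hμ₂S (by omega) (by omega) (by omega) hx'
  have hx'D : det2 μ₁ x' ≠ 0 := by
    have : d * det2 μ₁ x' = (d - s) * det2 μ₁ μ₂ := by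
      simpa only [det2_smul_right, det2_add_right, det2_self, mul_zero, zero_add] using
        congrArg (det2 μ₁) hx'
    exact fun h0 => hD (by nlinarith)
  have hx₂ : pair2 μ₂ ν < pair2 x ν := by
    refine (isMinOn_iff.1 hmin₂ x ⟨hxS, hxD⟩).lt_of_ne fun heq => ?_
    have := isMinOn_iff.1 htie x ⟨⟨hxS, hxD⟩, heq.symm⟩
    simp only [habs] at this
    omega
  have hx'₂ : pair2 μ₂ ν ≤ pair2 x' ν := isMinOn_iff.1 hmin₂ x' ⟨hx'S, hx'D⟩
  have h₁₂ : pair2 μ₁ ν ≤ pair2 μ₂ ν :=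
    isMinOn_iff.1 hmin₁ μ₂ ⟨hμ₂S, fun h0 => hD (by simp [Set.mem_singleton_iff.1 h0, det2])⟩
  simp only [x', pair2_sub, pair2_add] at hx'₂
  linarith

end MinimalPairing

theorem det2_ne_zero_of_mem_of_ne {G : Finset (ℤ × ℤ)}
    (hG : ∀ g ∈ G, g ∉ AddSubmonoid.closure ((G.erase g : Finset _) : Set (ℤ × ℤ)))
    {ν μ₁ μ : ℤ × ℤ} (hμ₁ : μ₁ ∈ G) (hcop : IsCoprime μ₁.1 μ₁.2) (hμ : μ ∈ G) (hne : μ ≠ μ₁)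
    (hpos₁ : 0 < pair2 μ₁ ν) (hpos : 0 < pair2 μ ν) : det2 μ₁ μ ≠ 0 := by
  intro h
  obtain ⟨k, rfl⟩ := exists_eq_smul_of_det2_eq_zero hcop h
  rw [pair2_smul] at hpos
  obtain ⟨n, rfl⟩ := Int.eq_ofNat_of_zero_le (pos_of_mul_pos_left hpos hpos₁.le).le
  refine hG _ hμ ?_
  rw [natCast_zsmul]
  exact AddSubmonoid.nsmul_mem _
    (AddSubmonoid.subset_closure (Finset.mem_erase.2 ⟨hne.symm, hμ₁⟩)) _

/-- Condition (*) for toric surfaces: let `σ̌` be a two-dimensional strongly convex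
rational cone in `ℝ²` (spanned by two `ℝ`-linearly independent lattice vectors
`w₁, w₂`), let `S = σ̌ ∩ ℤ²`, let `G` be the minimal generating set of the semigroup
`S`, and let `ν ∈ ℤ²` pair strictly positively with every nonzero element of `S`
(i.e. `ν` lies in the interior of the dual cone `σ`). Then there are `μ₁, μ₂ ∈ G`
forming a `ℤ`-basis of `ℤ²` such that `⟨μ, ν⟩ ≥ ⟨μᵢ, ν⟩` for every
`μ ∈ G \ {μ₁, μ₂}` and `i = 1, 2`. -/
theorem toric_surface_condition_star
    (w₁ w₂ : ℤ × ℤ) (hw : w₁.1 * w₂.2 - w₁.2 * w₂.1 ≠ 0)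
    (S : Set (ℤ × ℤ))
    (hS : S = {m : ℤ × ℤ | ∃ a b : ℝ, 0 ≤ a ∧ 0 ≤ b ∧
      (m.1 : ℝ) = a * w₁.1 + b * w₂.1 ∧ (m.2 : ℝ) = a * w₁.2 + b * w₂.2})
    (G : Finset (ℤ × ℤ))
    (hGS : (G : Set (ℤ × ℤ)) ⊆ S)
    (hgen : ∀ m ∈ S, genBy G m)
    (hmin : ∀ G' : Finset (ℤ × ℤ), G' ⊂ G → ∃ m ∈ S, ¬ genBy G' m)
    (ν : ℤ × ℤ) (hν : ∀ μ ∈ S, μ ≠ 0 → 0 < pair2 μ ν) :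
    ∃ μ₁ ∈ G, ∃ μ₂ ∈ G,
      (μ₁.1 * μ₂.2 - μ₁.2 * μ₂.1 = 1 ∨ μ₁.1 * μ₂.2 - μ₁.2 * μ₂.1 = -1) ∧
      ∀ μ ∈ G, μ ≠ μ₁ → μ ≠ μ₂ →
        pair2 μ₁ ν ≤ pair2 μ ν ∧ pair2 μ₂ ν ≤ pair2 μ ν := by
  have hcone : IsSaturatedCone S := hS ▸ isSaturatedCone_nonneg_span w₁ w₂
  have hw₁ : w₁ ∈ S := hS ▸ ⟨1, 0, zero_le_one, le_rfl, by simp, by simp⟩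
  have hw₂ : w₂ ∈ S := hS ▸ ⟨0, 1, le_rfl, zero_le_one, by simp, by simp⟩
  have hG := fun g (hg : g ∈ G) => notMem_closure_erase_of_minimal hgen hmin hg
  have hmemG : ∀ μ ∈ S, IsIndecomposableIn S μ → μ ∈ G := fun μ hμ h =>
    (h.mono (hcone.closure_subset hGS)).mem_of_mem_closure (genBy_iff_mem_closure.1 (hgen μ hμ))
  obtain ⟨μ₁, hμ₁, hmin₁⟩ := exists_isMinOn_int (pair2 · ν) (s := S \ {0})
    ⟨w₁, hw₁, fun h => hw (by simp [Set.mem_singleton_iff.1 h])⟩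
    ⟨0, by rintro _ ⟨μ, hμ, rfl⟩; exact (hν μ hμ.1 hμ.2).le⟩
  have hT : ∃ μ, μ ∈ S ∧ det2 μ₁ μ ≠ 0 := by
    by_contra! h
    exact hμ₁.2 (eq_zero_of_det2_eq_zero hw (h w₁ hw₁) (h w₂ hw₂))
  obtain ⟨μ₂, hμ₂, hmin₂, htie⟩ := exists_isMinOn_isMinOn_int (pair2 · ν) (|det2 μ₁ ·|) hT
    ⟨0, by rintro _ ⟨μ, ⟨hμ, hμD⟩, rfl⟩; exact (hν μ hμ (by rintro rfl; simp [det2] at hμD)).le⟩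
    ⟨0, by rintro _ ⟨μ, -, rfl⟩; exact abs_nonneg _⟩
  have hcop := isCoprime_of_isMinOn hcone hν hμ₁ hmin₁
  have hμ₁G := hmemG μ₁ hμ₁.1 (isIndecomposableIn_of_isMinOn hν hμ₁ hmin₁)
  have hG0 : (0 : ℤ × ℤ) ∉ G := fun h0 => hG 0 h0 (zero_mem _)
  refine ⟨μ₁, hμ₁G, μ₂, hmemG μ₂ hμ₂.1 (isIndecomposableIn_of_isMinOn_det2_ne_zero hν hμ₂ hmin₂),
    (abs_eq zero_le_one).1 (abs_det2_eq_one_of_isMinOn hcone hν hμ₁ hmin₁ hμ₂ hmin₂ htie),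
    fun μ hμ hne₁ _ => ?_⟩
  have hμ0 : μ ≠ 0 := ne_of_mem_of_not_mem hμ hG0
  exact ⟨isMinOn_iff.1 hmin₁ μ ⟨hGS hμ, hμ0⟩, isMinOn_iff.1 hmin₂ μ ⟨hGS hμ,
    det2_ne_zero_of_mem_of_ne hG hμ₁G hcop hμ hne₁ (hν μ₁ hμ₁.1 hμ₁.2) (hν μ (hGS hμ) hμ0)⟩⟩
end

section
/- Let 0 < p < q be coprime, σ the cone in ℝ² generated by (1,0) and (p,q), and (c₁,…,c_t) the Hirzebruch–Jung continued fraction of q/p. Then the minimal generating set of the semigroup σ̌ ∩ ℤ² has exactly t + 2 elements. -/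
/-- The value of a Hirzebruch–Jung continued fraction
`a₁ − 1/(a₂ − 1/(⋯ − 1/aₙ))` with integer entries, as a rational number. -/
def hjVal : List ℤ → ℚ
  | [] => 0
  | [a] => (a : ℚ)
  | a :: b :: l => (a : ℚ) - 1 / hjVal (b :: l)

/-!
In a pointed affine semigroup every minimal generating set is the set of irreducible elements, so
it suffices to count the irreducibles of `σ̌ ∩ ℤ²`. Apart from `(0,1)`, they all lie in the lower
half `m₂ ≤ 0`, and because `p < q` an element of the lower half is irreducible there iff it is
irreducible in `σ̌ ∩ ℤ²`. The unimodular map `(m₁, m₂) ↦ (c₁m₁ + m₂, -m₁)` carries the semigroup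
of the pair `(c₁p - q, p)` onto that lower half, and `p / (c₁p - q) = [c₂, …, c_t]`. So each entry
of the continued fraction adds one irreducible, and the recursion ends at `p = 0`, the quadrant,
with its two irreducibles `(1,0)` and `(0,1)`.
-/

namespace AddSubmonoid

section AddCommMonoid

variable {M N : Type*} [AddCommMonoid M] [AddCommMonoid N]

def irreducibles (S : AddSubmonoid M) : Set M :=
  {m | m ∈ S ∧ m ≠ 0 ∧ ∀ u ∈ S, ∀ v ∈ S, m = u + v → u = 0 ∨ v = 0}

variable {S T : AddSubmonoid M}

theorem mem_irreducibles_of_le (hTS : T ≤ S) {m : M} (hmT : m ∈ T)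
    (hm : m ∈ S.irreducibles) : m ∈ T.irreducibles :=
  ⟨hmT, hm.2.1, fun u hu v hv => hm.2.2 u (hTS hu) v (hTS hv)⟩

theorem irreducibles_subset_of_le_closure {G : Set M} (hGS : closure G ≤ S)
    (hSG : S ≤ closure G) : S.irreducibles ⊆ G := by
  intro m hm
  induction hSG hm.1 using closure_induction_left with
  | zero => exact absurd rfl hm.2.1
  | add_left x hx y hy ih =>
    rcases hm.2.2 x (hGS (subset_closure hx)) y (hGS hy) rfl with rfl | rfl
    · rw [zero_add] at hm ⊢
      exact ih hm
    · rwa [add_zero]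

theorem le_closure_irreducibles (h : M →+ ℤ) (hpos : ∀ m ∈ S, m ≠ 0 → 0 < h m) :
    S ≤ closure S.irreducibles := by
  intro m hm
  induction hn : (h m).toNat using Nat.strong_induction_on generalizing m with
  | _ n ih =>
  by_cases hm0 : m = 0
  · exact hm0 ▸ zero_mem _
  by_cases hirr : ∀ u ∈ S, ∀ v ∈ S, m = u + v → u = 0 ∨ v = 0
  · exact subset_closure ⟨hm, hm0, hirr⟩
  push Not at hirr
  obtain ⟨u, hu, v, hv, rfl, hu0, hv0⟩ := hirr
  have := hpos u hu hu0
  have := hpos v hv hv0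
  rw [map_add] at hn
  exact add_mem (ih _ (by omega) hu rfl) (ih _ (by omega) hv rfl)

theorem coe_eq_irreducibles_of_minimal (h : M →+ ℤ) (hpos : ∀ m ∈ S, m ≠ 0 → 0 < h m)
    {G : Finset M} (hGS : (G : Set M) ⊆ S) (hSG : S ≤ closure G)
    (hmin : ∀ G' ⊂ G, ¬ S ≤ closure (G' : Set M)) : (G : Set M) = S.irreducibles := by
  classical
  have hirr : S.irreducibles ⊆ G := irreducibles_subset_of_le_closure (closure_le.2 hGS) hSG
  refine subset_antisymm (fun g hg => ?_) hirr
  by_contra hgirr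
  refine hmin (G.erase g) (Finset.erase_ssubset hg) ((le_closure_irreducibles h hpos).trans ?_)
  refine closure_mono fun x hx => ?_
  simp only [Finset.coe_erase, Set.mem_sdiff, Set.mem_singleton_iff]
  exact ⟨hirr hx, fun hxg => hgirr (hxg ▸ hx)⟩

theorem irreducibles_map_equiv (e : M ≃+ N) (S : AddSubmonoid M) :
    (S.map e.toAddMonoidHom).irreducibles = e '' S.irreducibles := by
  ext n
  obtain ⟨m, rfl⟩ := e.surjective n
  simp only [irreducibles, Set.mem_ofPred_eq, e.injective.mem_set_image, mem_map_equiv,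
    e.symm_apply_apply, ne_eq, map_eq_zero_iff e e.injective]
  refine and_congr_right fun _ => and_congr_right fun _ =>
    ⟨fun h u hu v hv huv => ?_, fun h u hu v hv huv => ?_⟩
  · simpa using h (e u) (by simpa) (e v) (by simpa) (by rw [huv, map_add])
  · simpa using h (e.symm u) hu (e.symm v) hv (e.injective (by simpa using huv))

end AddCommMonoid

theorem eq_of_sub_mem_of_mem_irreducibles {A : Type*} [AddCommGroup A] {S : AddSubmonoid A}
    {m u : A} (hm : m ∈ S.irreducibles) (hu : u ∈ S) (hmu : m - u ∈ S) (hu0 : u ≠ 0) : m = u :=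
  (hm.2.2 u hu _ hmu (add_sub_cancel u m).symm).resolve_left hu0 |> sub_eq_zero.1

end AddSubmonoid

/-- Since `hjVal [] = 0` and `0⁻¹ = 0` in `ℚ`, this also holds for `l = []`. -/
theorem hjVal_cons (a : ℤ) (l : List ℤ) : hjVal (a :: l) = a - (hjVal l)⁻¹ := by
  cases l with
  | nil => simp [hjVal]
  | cons b l => simp [hjVal]

theorem inv_hjVal_mem_Ico {c : List ℤ} (hc : ∀ a ∈ c, 2 ≤ a) :
    (hjVal c)⁻¹ ∈ Set.Ico (0 : ℚ) 1 := by
  induction c with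
  | nil => simp [hjVal]
  | cons a l ih =>
    have ha : (2 : ℚ) ≤ a := by exact_mod_cast hc a List.mem_cons_self
    obtain ⟨h0, h1⟩ := ih fun b hb => hc b (List.mem_cons_of_mem a hb)
    have hgt : 1 < hjVal (a :: l) := by rw [hjVal_cons]; linarith
    exact ⟨by positivity, inv_lt_one_of_one_lt₀ hgt⟩

namespace HirzebruchJung

open AddSubmonoid

def cone (p q : ℤ) : AddSubmonoid (ℤ × ℤ) where
  carrier := {m | 0 ≤ m.1 ∧ 0 ≤ p * m.1 + q * m.2}
  add_mem' hu hv :=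
    ⟨add_nonneg hu.1 hv.1, by simp only [Prod.fst_add, Prod.snd_add]; linarith [hu.2, hv.2]⟩
  zero_mem' := by simp

def lowerCone (p q : ℤ) : AddSubmonoid (ℤ × ℤ) where
  carrier := {m | 0 ≤ m.1 ∧ 0 ≤ p * m.1 + q * m.2 ∧ m.2 ≤ 0}
  add_mem' hu hv := ⟨add_nonneg hu.1 hv.1,
    by simp only [Prod.fst_add, Prod.snd_add]; linarith [hu.2.1, hv.2.1], add_nonpos hu.2.2 hv.2.2⟩
  zero_mem' := by simp

variable {p q : ℤ} {m u v : ℤ × ℤ}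

@[simp]
theorem mem_cone : m ∈ cone p q ↔ 0 ≤ m.1 ∧ 0 ≤ p * m.1 + q * m.2 := Iff.rfl

@[simp]
theorem mem_lowerCone : m ∈ lowerCone p q ↔ 0 ≤ m.1 ∧ 0 ≤ p * m.1 + q * m.2 ∧ m.2 ≤ 0 :=
  Iff.rfl

theorem lowerCone_le_cone : lowerCone p q ≤ cone p q := fun _ hm => ⟨hm.1, hm.2.1⟩

theorem snd_nonneg_of_fst_eq_zero (hq : 0 < q) (hm : m ∈ cone p q) (h1 : m.1 = 0) : 0 ≤ m.2 := by
  have := hm.2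
  rw [h1, mul_zero, zero_add] at this
  exact nonneg_of_mul_nonneg_right this hq

theorem snd_pos_of_fst_eq_zero (hq : 0 < q) (hm : m ∈ cone p q) (hm0 : m ≠ 0) (h1 : m.1 = 0) :
    0 < m.2 :=
  (snd_nonneg_of_fst_eq_zero hq hm h1).lt_of_ne fun h2 => hm0 (Prod.ext h1 h2.symm)

theorem exists_pos_addMonoidHom_cone (hp : 0 ≤ p) (hq : 0 < q) :
    ∃ h : ℤ × ℤ →+ ℤ, ∀ m ∈ cone p q, m ≠ 0 → 0 < h m := by
  refine ⟨(1 + p) • AddMonoidHom.fst ℤ ℤ + q • AddMonoidHom.snd ℤ ℤ, fun m hm hm0 => ?_⟩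
  simp only [AddMonoidHom.add_apply, AddMonoidHom.smul_apply, AddMonoidHom.coe_fst,
    AddMonoidHom.coe_snd, smul_eq_mul]
  rcases hm.1.lt_or_eq with h1 | h1
  · nlinarith [hm.2]
  · have := snd_pos_of_fst_eq_zero hq hm hm0 h1.symm
    rw [← h1]
    positivity

theorem zero_one_mem_irreducibles_cone (hq : 0 < q) :
    ((0, 1) : ℤ × ℤ) ∈ (cone p q).irreducibles := by
  refine ⟨by simpa using hq.le, by simp, fun u hu v hv huv => ?_⟩
  simp only [Prod.ext_iff, Prod.fst_add, Prod.snd_add, Prod.fst_zero, Prod.snd_zero] at huv ⊢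
  have hu1 : u.1 = 0 := by linarith [hu.1, hv.1]
  have hv1 : v.1 = 0 := by linarith [hu.1, hv.1]
  have := snd_nonneg_of_fst_eq_zero hq hu hu1
  have := snd_nonneg_of_fst_eq_zero hq hv hv1
  omega

theorem one_zero_mem_irreducibles_cone_zero (hq : 0 < q) :
    ((1, 0) : ℤ × ℤ) ∈ (cone 0 q).irreducibles := by
  refine ⟨by simp, by simp, fun u hu v hv huv => ?_⟩
  simp only [Prod.ext_iff, Prod.fst_add, Prod.snd_add, Prod.fst_zero, Prod.snd_zero] at huv ⊢
  have := nonneg_of_mul_nonneg_right (by simpa using hu.2) hq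
  have := nonneg_of_mul_nonneg_right (by simpa using hv.2) hq
  have := hu.1
  have := hv.1
  omega

theorem irreducibles_cone_zero (hq : 0 < q) :
    (cone 0 q).irreducibles = {(1, 0), (0, 1)} := by
  ext m
  refine ⟨fun hm => ?_, ?_⟩
  · rcases hm.1.1.lt_or_eq with h1 | h1
    · left
      refine eq_of_sub_mem_of_mem_irreducibles hm (by simp) ?_ (by simp)
      simp only [mem_cone, Prod.fst_sub, Prod.snd_sub, sub_zero, zero_mul, zero_add]
      exact ⟨by omega, by simpa using hm.1.2⟩
    · right
      have := snd_pos_of_fst_eq_zero hq hm.1 hm.2.1 h1.symm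
      refine eq_of_sub_mem_of_mem_irreducibles hm (by simpa using hq.le) ?_ (by simp)
      simp only [mem_cone, Prod.fst_sub, Prod.snd_sub, ← h1]
      constructor <;> nlinarith
  · rintro (rfl | rfl)
    · exact one_zero_mem_irreducibles_cone_zero hq
    · exact zero_one_mem_irreducibles_cone hq

theorem snd_nonpos_of_mem_irreducibles_cone (hp : 0 ≤ p) (hq : 0 < q)
    (hm : m ∈ (cone p q).irreducibles) (hm01 : m ≠ (0, 1)) : m.2 ≤ 0 := by
  by_contra! h2
  refine hm01 (eq_of_sub_mem_of_mem_irreducibles hm (by simpa using hq.le) ?_ (by simp))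
  simp only [mem_cone, Prod.fst_sub, Prod.snd_sub, sub_zero]
  exact ⟨hm.1.1, by nlinarith [mul_nonneg hp hm.1.1, hm.1.2]⟩

/-- A summand with positive second coordinate would force `m = (1, 0)`, which is reducible in
`cone p q` because `p < q`. -/
theorem snd_nonpos_of_eq_add (hp : 0 ≤ p) (hpq : p < q) (hm : m ∈ (lowerCone p q).irreducibles)
    (hu : u ∈ cone p q) (hv : v ∈ cone p q) (huv : m = u + v) : u.2 ≤ 0 := by
  by_contra! hu2
  obtain ⟨hm1, hm2, hm3⟩ := hm.1
  obtain ⟨hu1, hu'⟩ := hu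
  obtain ⟨hv1, hv'⟩ := hv
  subst huv
  simp only [Prod.fst_add, Prod.snd_add] at hm1 hm2 hm3
  have hqu : q ≤ q * u.2 := by nlinarith
  have hv1 : 1 ≤ v.1 := by nlinarith
  have h10 : u + v = (1, 0) := by
    refine eq_of_sub_mem_of_mem_irreducibles hm (by simpa using hp) ?_ (by simp)
    simp only [mem_lowerCone, Prod.fst_sub, Prod.snd_sub, Prod.fst_add, Prod.snd_add, sub_zero]
    refine ⟨by omega, by nlinarith, hm3⟩
  simp only [Prod.ext_iff, Prod.fst_add, Prod.snd_add] at h10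
  nlinarith

theorem irreducibles_cone_eq_insert (hp : 0 ≤ p) (hpq : p < q) :
    (cone p q).irreducibles = insert (0, 1) (lowerCone p q).irreducibles := by
  have hq : 0 < q := by omega
  ext m
  rw [Set.mem_insert_iff]
  refine ⟨fun hm => ?_, ?_⟩
  · refine or_iff_not_imp_left.2 fun hm01 => mem_irreducibles_of_le lowerCone_le_cone ?_ hm
    exact ⟨hm.1.1, hm.1.2, snd_nonpos_of_mem_irreducibles_cone hp hq hm hm01⟩
  · rintro (rfl | hm)
    · exact zero_one_mem_irreducibles_cone hq
    refine ⟨lowerCone_le_cone hm.1, hm.2.1, fun u hu v hv huv => hm.2.2 u ?_ v ?_ huv⟩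
    · exact ⟨hu.1, hu.2, snd_nonpos_of_eq_add hp hpq hm hu hv huv⟩
    · exact ⟨hv.1, hv.2, snd_nonpos_of_eq_add hp hpq hm hv hu (huv.trans (add_comm u v))⟩

def coneEquiv (a : ℤ) : (ℤ × ℤ) ≃+ (ℤ × ℤ) where
  toFun m := (a * m.1 + m.2, -m.1)
  invFun n := (-n.2, n.1 + a * n.2)
  left_inv m := by ext <;> simp
  right_inv n := by ext <;> simp
  map_add' u v := by ext <;> simp <;> ring

theorem lowerCone_eq_map (hp : 0 < p) (hq : 0 ≤ q) (a : ℤ) :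
    lowerCone p q = (cone (a * p - q) p).map (coneEquiv a).toAddMonoidHom := by
  ext n
  have hsymm : (coneEquiv a).symm n = (-n.2, n.1 + a * n.2) := rfl
  rw [mem_map_equiv, hsymm, mem_lowerCone, mem_cone]
  have key : (a * p - q) * -n.2 + p * (n.1 + a * n.2) = p * n.1 + q * n.2 := by ring
  rw [key]
  constructor
  · rintro ⟨-, h, h2⟩
    exact ⟨by omega, h⟩
  · rintro ⟨h2, h⟩
    exact ⟨by nlinarith, h, by omega⟩

theorem encard_irreducibles_cone_eq_add_one (hp : 0 < p) (hpq : p < q) (a : ℤ) :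
    (cone p q).irreducibles.encard = (cone (a * p - q) p).irreducibles.encard + 1 := by
  rw [irreducibles_cone_eq_insert hp.le hpq,
    Set.encard_insert_of_notMem fun h => by simpa using h.1.2.2,
    lowerCone_eq_map hp (by omega) a, irreducibles_map_equiv, (coneEquiv a).injective.encard_image]

theorem encard_irreducibles_cone {c : List ℤ} (hc : ∀ a ∈ c, 2 ≤ a) {p q : ℤ} (hp : 0 ≤ p)
    (hpq : p < q) (hval : hjVal c = q / p) :
    (cone p q).irreducibles.encard = c.length + 2 := by
  induction c generalizing p q with
  | nil =>
    obtain rfl : p = 0 := by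
      have : (q : ℚ) ≠ 0 := by exact_mod_cast (show q ≠ 0 by omega)
      simpa [hjVal, this, eq_comm] using hval
    rw [irreducibles_cone_zero (by omega), Set.encard_pair (by simp)]
    rfl
  | cons a l ih =>
    have hl : ∀ b ∈ l, 2 ≤ b := fun b hb => hc b (List.mem_cons_of_mem a hb)
    obtain ⟨hr0, hr1⟩ := inv_hjVal_mem_Ico hl
    have ha : (2 : ℚ) ≤ a := by exact_mod_cast hc a List.mem_cons_self
    rw [hjVal_cons] at hval
    have hp0 : 0 < p := by
      refine hp.lt_of_ne fun hp0 => ?_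
      subst hp0
      simp only [Int.cast_zero, div_zero] at hval
      linarith
    have hpQ : (0 : ℚ) < p := by exact_mod_cast hp0
    have hrinv : (hjVal l)⁻¹ = ((a * p - q : ℤ) : ℚ) / p := by
      rw [show (hjVal l)⁻¹ = a - q / p by linarith]
      push_cast
      field_simp
    have hlval : hjVal l = p / ((a * p - q : ℤ) : ℚ) := by rw [← inv_div, ← hrinv, inv_inv]
    rw [hrinv] at hr0 hr1
    have h0 : 0 ≤ a * p - q := by
      have := (le_div_iff₀ hpQ).1 hr0
      rw [zero_mul] at this
      exact_mod_cast this
    have h1 : a * p - q < p := by exact_mod_cast (div_lt_one hpQ).1 hr1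
    rw [encard_irreducibles_cone_eq_add_one hp0 hpq a, ih hl h0 h1 hlval, List.length_cons]
    push_cast
    ring

end HirzebruchJung

theorem hilbert_basis_card_general (p q : ℤ) (hp : 0 < p) (hpq : p < q)
    (c : List ℤ) (hc : ∀ a ∈ c, 2 ≤ a)
    (hval : hjVal c = (q : ℚ) / (p : ℚ))
    (S : Set (ℤ × ℤ))
    (hS : S = {m : ℤ × ℤ | 0 ≤ m.1 ∧ 0 ≤ p * m.1 + q * m.2})
    (G : Finset (ℤ × ℤ))
    (hGS : (G : Set (ℤ × ℤ)) ⊆ S)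
    (hgen : ∀ m ∈ S, genBy G m)
    (hmin : ∀ G' : Finset (ℤ × ℤ), G' ⊂ G → ∃ m ∈ S, ¬ genBy G' m) :
    G.card = c.length + 2 := by
  subst hS
  obtain ⟨h, hpos⟩ := HirzebruchJung.exists_pos_addMonoidHom_cone hp.le (hp.trans hpq)
  have hG : (G : Set (ℤ × ℤ)) = (HirzebruchJung.cone p q).irreducibles := by
    refine AddSubmonoid.coe_eq_irreducibles_of_minimal h hpos hGS
      (fun m hm => genBy_iff_mem_closure.1 (hgen m hm)) fun G' hG' hle => ?_
    obtain ⟨m, hm, hnot⟩ := hmin G' hG'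
    exact hnot (genBy_iff_mem_closure.2 (hle hm))
  have hcard := HirzebruchJung.encard_irreducibles_cone hc hp.le hpq hval
  rw [← hG, Set.encard_coe_eq_coe_finsetCard] at hcard
  exact_mod_cast hcard

/-- For `0 < p < q` coprime, `σ` the cone generated by `(1,0)` and `(p,q)`, and
`(c₁,…,c_t)` the Hirzebruch–Jung expansion of `q/p`, the minimal generating set of
the semigroup `σ̌ ∩ ℤ²` has exactly `t + 2` elements. Here `σ̌ ∩ ℤ²` is the set of
lattice points `m` with `m₁ ≥ 0` and `p·m₁ + q·m₂ ≥ 0`. -/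
theorem hilbert_basis_card (p q : ℤ) (hp : 0 < p) (hpq : p < q)
    (hcop : IsCoprime p q)
    (c : List ℤ) (hc : ∀ a ∈ c, 2 ≤ a)
    (hval : hjVal c = (q : ℚ) / (p : ℚ))
    (S : Set (ℤ × ℤ))
    (hS : S = {m : ℤ × ℤ | 0 ≤ m.1 ∧ 0 ≤ p * m.1 + q * m.2})
    (G : Finset (ℤ × ℤ))
    (hGS : (G : Set (ℤ × ℤ)) ⊆ S)
    (hgen : ∀ m ∈ S, genBy G m)
    (hmin : ∀ G' : Finset (ℤ × ℤ), G' ⊂ G → ∃ m ∈ S, ¬ genBy G' m) :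
    G.card = c.length + 2 :=
  hilbert_basis_card_general p q hp hpq c hc hval S hS G hGS hgen hmin
end

section
/- Let σ be the cone in ℝ² generated by (1,0) and (p,q), 0 < p < q coprime, and let x₀,…,x_{t+1} be the minimal generators of σ̌ ∩ ℤ², ordered along the boundary. Then xᵢ₋₁ + xᵢ₊₁ = cᵢ xᵢ for 1 ≤ i ≤ t, where (c₁,…,c_t) is the Hirzebruch–Jung continued fraction of q/p. -/
namespace HB

lemma hj_single (a : ℤ) : hjVal [a] = (a : ℚ) := rfl

lemma hj_cons (a : ℤ) (l : List ℤ) (hl : l ≠ []) :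
    hjVal (a :: l) = (a : ℚ) - 1 / hjVal l := by
  cases l with
  | nil => exact absurd rfl hl
  | cons b l => rfl

lemma hj_gt_one : ∀ l : List ℤ, l ≠ [] → (∀ a ∈ l, 2 ≤ a) → 1 < hjVal l
  | [], h, _ => absurd rfl h
  | [a], _, h2 => by
      have : (2:ℚ) ≤ a := by exact_mod_cast h2 a (by simp)
      simpa [hjVal] using by linarith
  | a :: b :: l, _, h2 => by
      have ih : 1 < hjVal (b :: l) := hj_gt_one (b :: l) (by simp) (fun x hx => h2 x (by simp [hx]))
      have ha : (2:ℚ) ≤ a := by exact_mod_cast h2 a (by simp)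
      have h0 : 0 < hjVal (b :: l) := by linarith
      have : 1 / hjVal (b :: l) < 1 := by rw [div_lt_one h0]; exact ih
      have hge : 0 < 1 / hjVal (b :: l) := by positivity
      show (a : ℚ) - 1 / hjVal (b :: l) > 1
      linarith

lemma hjtail (c : List ℤ) (hc : ∀ a ∈ c, 2 ≤ a) (p q : ℤ) (hp : 0 < p) (hq : 0 < q)
    (hval : hjVal c = (q : ℚ) / (p : ℚ)) (U : ℕ → ℤ) (hU0 : U 0 = q) (hU1 : U 1 = p)
    (hUrec : ∀ n, U (n+2) = c.getD n 0 * U (n+1) - U n) :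
    ∀ k, k + 1 ≤ c.length → 0 < U (k+1) ∧ (U k : ℚ) = (U (k+1) : ℚ) * hjVal (c.drop k) := by
  intro k
  induction k with
  | zero =>
      intro _
      refine ⟨by rw [show (0+1:ℕ)=1 from rfl, hU1]; exact hp, ?_⟩
      rw [hU0, hU1, List.drop_zero, hval]
      field_simp
  | succ k ih =>
      intro hk
      obtain ⟨hpos, heq⟩ := ih (by omega)
      have hklen : k < c.length := by omega
      have hdrop : c.drop k = (c.get ⟨k, hklen⟩) :: c.drop (k+1) := by rw [List.drop_eq_getElem_cons hklen]; rfl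
      have hne : c.drop (k+1) ≠ [] := by
        intro h
        have := List.drop_eq_nil_iff.mp h
        omega
      have hr1 : 1 < hjVal (c.drop (k+1)) :=
        hj_gt_one _ hne (fun a ha => hc a (List.mem_of_mem_drop ha))
      have hr0 : (0:ℚ) < hjVal (c.drop (k+1)) := by linarith
      have hck : c.getD k 0 = (c.get ⟨k, hklen⟩) := by rw [List.getD_eq_getElem c 0 hklen]; rfl
      have hsplit : hjVal (c.drop k) = ((c.get ⟨k, hklen⟩) : ℚ) - 1 / hjVal (c.drop (k+1)) := by
        rw [hdrop, hj_cons _ _ hne]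
      have hrec : (U (k+2) : ℚ) = ((c.get ⟨k, hklen⟩) : ℚ) * U (k+1) - U k := by
        have := hUrec k
        rw [hck] at this
        exact_mod_cast this
      have key : (U (k+2) : ℚ) = (U (k+1) : ℚ) / hjVal (c.drop (k+1)) := by
        rw [hrec, heq, hsplit]
        field_simp
        ring
      have hU2pos : 0 < U (k+2) := by
        have : (0:ℚ) < (U (k+2) : ℚ) := by
          rw [key]
          apply div_pos _ hr0
          exact_mod_cast hpos
        exact_mod_cast this
      refine ⟨hU2pos, ?_⟩
      rw [key]
      field_simp



def dt (a b : ℤ × ℤ) : ℤ := a.1 * b.2 - a.2 * b.1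

def yseq (c : List ℤ) : ℕ → ℤ × ℤ
  | 0 => (0, 1)
  | 1 => (1, 0)
  | (n+2) => c.getD n 0 • yseq c (n+1) - yseq c n

lemma yseq_rec (c : List ℤ) (n : ℕ) :
    yseq c (n+2) = c.getD n 0 • yseq c (n+1) - yseq c n := rfl

lemma dt_consec (c : List ℤ) : ∀ n, dt (yseq c n) (yseq c (n+1)) = -1 := by
  intro n
  induction n with
  | zero => simp [yseq, dt]
  | succ n ih =>
      show dt (yseq c (n+1)) (yseq c (n+2)) = -1
      rw [yseq_rec]
      simp only [dt, Prod.smul_fst, Prod.smul_snd, Prod.fst_sub, Prod.snd_sub, smul_eq_mul]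
      simp only [dt] at ih
      ring_nf
      ring_nf at ih
      linarith

section main
variable (p q : ℤ) (c : List ℤ)

/-- the value of the dual-cone supporting functional `⟨(p,q), ·⟩` along the sequence -/
def U (i : ℕ) : ℤ := p * (yseq c i).1 + q * (yseq c i).2

lemma U0 : U p q c 0 = q := by simp [U, yseq]
lemma U1 : U p q c 1 = p := by simp [U, yseq]
lemma Urec (n : ℕ) : U p q c (n+2) = c.getD n 0 * U p q c (n+1) - U p q c n := by
  simp only [U, yseq_rec, Prod.fst_sub, Prod.snd_sub, Prod.smul_fst, Prod.smul_snd, smul_eq_mul]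
  ring

variable (hp : 0 < p) (hpq : p < q) (hc : ∀ a ∈ c, 2 ≤ a)
    (hval : hjVal c = (q : ℚ) / (p : ℚ))

include hp hpq hc hval

omit hc in
lemma c_ne_nil : c ≠ [] := by
  intro h
  rw [h] at hval
  have : (0:ℚ) < (q:ℚ)/(p:ℚ) := by
    apply div_pos <;> exact_mod_cast by omega
  rw [← hval] at this
  simp [hjVal] at this

lemma hjtail' : ∀ k, k + 1 ≤ c.length →
    0 < U p q c (k+1) ∧ (U p q c k : ℚ) = (U p q c (k+1) : ℚ) * hjVal (c.drop k) :=
  hjtail c hc p q hp (by omega) hval (U p q c) (U0 p q c) (U1 p q c) (Urec p q c)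

lemma Upos : ∀ i ≤ c.length, 0 < U p q c i := by
  intro i hi
  cases i with
  | zero => rw [U0]; omega
  | succ k => exact (hjtail' p q c hp hpq hc hval k hi).1

lemma Ulast : U p q c (c.length + 1) = 0 := by
  have hne := c_ne_nil p q c hp hpq hval
  have ht1 : 1 ≤ c.length := by
    cases c with
    | nil => exact absurd rfl hne
    | cons a l => simp
  set t := c.length with htdef
  have hk : t - 1 < t := by omega
  obtain ⟨hpos, heq⟩ := hjtail' p q c hp hpq hc hval (t-1) (by omega)
  have hdrop : c.drop (t-1) = [c.get ⟨t-1, hk⟩] := by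
    have h2 : c.drop t = [] := by simp [htdef]
    rw [List.drop_eq_getElem_cons hk]
    rw [show t - 1 + 1 = t from by omega, h2]
    rfl
  rw [hdrop, hj_single] at heq
  have hgetD : c.getD (t-1) 0 = c.get ⟨t-1, hk⟩ := by
    rw [List.getD_eq_getElem c 0 hk]; rfl
  have heqz : U p q c (t-1) = U p q c (t-1+1) * c.get ⟨t-1, hk⟩ := by exact_mod_cast heq
  have := Urec p q c (t-1)
  rw [show t - 1 + 2 = t + 1 from by omega, hgetD] at this
  rw [this, heqz]
  ring


lemma fst_mono : ∀ i, i ≤ c.length → 0 ≤ (yseq c i).1 ∧ (yseq c i).1 < (yseq c (i+1)).1 := by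
  intro i
  induction i with
  | zero => intro _; simp [yseq]
  | succ i ih =>
      intro hi
      obtain ⟨h0, h1⟩ := ih (by omega)
      have hc2 : 2 ≤ c.getD i 0 := by
        have hlt : i < c.length := by omega
        rw [List.getD_eq_getElem c 0 hlt]
        exact hc _ (List.getElem_mem hlt)
      constructor
      · omega
      · rw [yseq_rec]
        simp only [Prod.fst_sub, Prod.smul_fst, smul_eq_mul]
        nlinarith

lemma fst_nonneg : ∀ i ≤ c.length + 1, 0 ≤ (yseq c i).1 := by
  intro i hi
  rcases Nat.lt_or_ge i (c.length + 1) with h | h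
  · exact (fst_mono p q c hp hpq hc hval i (by omega)).1
  · have hi' : i = c.length + 1 := by omega
    subst hi'
    have := fst_mono p q c hp hpq hc hval c.length (le_refl _)
    omega

lemma fst_pos : ∀ i, 1 ≤ i → i ≤ c.length + 1 → 0 < (yseq c i).1 := by
  intro i h1 h2
  induction i with
  | zero => omega
  | succ i ih =>
      rcases Nat.eq_or_lt_of_le h1 with h | h
      · rw [← h]; simp [yseq]
      · have := fst_mono p q c hp hpq hc hval i (by omega)
        have := ih (by omega) (by omega)
        omega

variable (hcop : IsCoprime p q)
include hcop

lemma ylast : yseq c (c.length + 1) = (q, -p) := by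
  set t := c.length with ht
  set β := (yseq c (t+1)).1 with hβ
  set α := (yseq c (t+1)).2 with hα
  have hu : p * β + q * α = 0 := Ulast p q c hp hpq hc hval
  have hbpos : 0 < β := fst_pos p q c hp hpq hc hval (t+1) (by omega) (le_refl _)
  have hd : dt (yseq c t) (yseq c (t+1)) = -1 := dt_consec c t
  have hqd : q ∣ β := by
    refine (hcop.symm).dvd_of_dvd_mul_left ⟨-α, by linarith⟩
  obtain ⟨k, hk⟩ := hqd
  have hαk : α = -(p * k) := by
    have h0 : q * (p * k + α) = 0 := by rw [hk] at hu; linarith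
    have hq0 : q ≠ 0 := by omega
    have := mul_eq_zero.mp h0
    rcases this with h | h
    · exact absurd h hq0
    · linarith
  have hkpos : 0 < k := by
    rcases le_or_gt k 0 with h | h
    · nlinarith
    · exact h
  have hdt : dt (yseq c t) (yseq c (t+1)) = -(k * U p q c t) := by
    simp only [dt, U, ← hβ, ← hα, hk, hαk]
    ring
  have hk1 : k * U p q c t = 1 := by rw [hdt] at hd; omega
  have hUt : 0 < U p q c t := Upos p q c hp hpq hc hval t (le_refl _)
  have hkone : k = 1 := by nlinarith
  have : β = q ∧ α = -p := by constructor <;> [rw [hk, hkone]; rw [hαk, hkone]] <;> ring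
  have hco : yseq c (t+1) = (β, α) := rfl
  rw [hco, this.1, this.2]


omit hp hpq hc hval hcop in
lemma cramer (a b w : ℤ × ℤ) : dt a b • w = dt w b • a + dt a w • b := by
  have h1 : (dt a b • w).1 = (dt w b • a + dt a w • b).1 := by
    simp only [Prod.smul_fst, Prod.fst_add, smul_eq_mul, dt]; ring
  have h2 : (dt a b • w).2 = (dt w b • a + dt a w • b).2 := by
    simp only [Prod.smul_snd, Prod.snd_add, smul_eq_mul, dt]; ring
  exact Prod.ext h1 h2

end main

section order
variable (p q : ℤ) (c : List ℤ)

/-- positive linear functional on the dual cone -/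
def Lf (m : ℤ × ℤ) : ℤ := (1 + p) * m.1 + q * m.2

lemma Lf_eq (m : ℤ × ℤ) : Lf p q m = m.1 + (p * m.1 + q * m.2) := by simp [Lf]; ring

variable (hp : 0 < p) (hpq : p < q) (hc : ∀ a ∈ c, 2 ≤ a)
    (hval : hjVal c = (q : ℚ) / (p : ℚ)) (hcop : IsCoprime p q)
include hp hpq hc hval

lemma Lf_y_pos : ∀ i ≤ c.length + 1, 0 < Lf p q (yseq c i) := by
  intro i hi
  rcases Nat.lt_or_ge i (c.length + 1) with h | h
  · rw [Lf_eq]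
    have h1 := fst_nonneg p q c hp hpq hc hval i hi
    have h2 := Upos p q c hp hpq hc hval i (by omega)
    rw [U] at h2
    omega
  · have hi' : i = c.length + 1 := by omega
    subst hi'
    rw [Lf_eq]
    have h1 := fst_pos p q c hp hpq hc hval (c.length + 1) (by omega) (le_refl _)
    have h2 := Ulast p q c hp hpq hc hval
    rw [U] at h2
    omega

omit hp hpq hc hval in
lemma dt_trans (a b w : ℤ × ℤ) (hla : 0 < Lf p q a) (hlb : 0 < Lf p q b)
    (hlw : 0 < Lf p q w) (h1 : dt a b < 0) (h2 : dt b w < 0) : dt a w < 0 := by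
  have hid : dt a w * Lf p q b = dt b w * Lf p q a + dt a b * Lf p q w := by
    simp only [dt, Lf]; ring
  nlinarith

lemma dt_lt : ∀ j ≤ c.length + 1, ∀ i < j, dt (yseq c i) (yseq c j) < 0 := by
  intro j
  induction j with
  | zero => intro _ i hi; omega
  | succ j ih =>
      intro hj i hi
      rcases Nat.eq_or_lt_of_le (Nat.le_of_lt_succ hi) with h | h
      · subst h; rw [dt_consec]; omega
      · exact dt_trans p q (yseq c i) (yseq c j) (yseq c (j+1))
          (Lf_y_pos p q c hp hpq hc hval i (by omega))
          (Lf_y_pos p q c hp hpq hc hval j (by omega))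
          (Lf_y_pos p q c hp hpq hc hval (j+1) hj)
          (ih (by omega) i h) (by rw [dt_consec]; omega)

lemma y_inj : ∀ i ≤ c.length + 1, ∀ j ≤ c.length + 1, yseq c i = yseq c j → i = j := by
  intro i hi j hj hij
  have hself : ∀ a : ℤ × ℤ, dt a a = 0 := by intro a; simp only [dt]; ring
  rcases Nat.lt_trichotomy i j with h | h | h
  · have := dt_lt p q c hp hpq hc hval j hj i h
    rw [hij, hself] at this
    omega
  · exact h
  · have := dt_lt p q c hp hpq hc hval i hi j h
    rw [hij, hself] at this
    omega

include hcop

lemma decomp_pair (m : ℤ × ℤ) (j : ℕ) (hj : j ≤ c.length)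
    (h1 : 0 ≤ dt m (yseq c j)) (h2 : dt m (yseq c (j+1)) ≤ 0) :
    ∃ jj ≤ c.length, ∃ A B : ℕ, m = (A : ℤ) • yseq c jj + (B : ℤ) • yseq c (jj+1) := by
  refine ⟨j, hj, (-(dt m (yseq c (j+1)))).toNat, (dt m (yseq c j)).toNat, ?_⟩
  have hcr := cramer (yseq c j) (yseq c (j+1)) m
  rw [dt_consec] at hcr
  have hA : ((-(dt m (yseq c (j+1)))).toNat : ℤ) = -(dt m (yseq c (j+1))) := Int.toNat_of_nonneg (by omega)
  have hB : ((dt m (yseq c j)).toNat : ℤ) = dt m (yseq c j) := Int.toNat_of_nonneg h1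
  rw [hA, hB]
  have h2' : dt (yseq c j) m = -(dt m (yseq c j)) := by simp only [dt]; ring
  rw [h2'] at hcr
  have h3 : m = -(dt m (yseq c (j+1)) • yseq c j + (-(dt m (yseq c j))) • yseq c (j+1)) := by
    rw [← hcr, neg_one_smul, neg_neg]
  conv_lhs => rw [h3]
  rw [neg_add, ← neg_smul, ← neg_smul, neg_neg]

lemma decomp (m : ℤ × ℤ) (hm1 : 0 ≤ m.1) (hm2 : 0 ≤ p * m.1 + q * m.2) :
    ∃ jj ≤ c.length, ∃ A B : ℕ, m = (A : ℤ) • yseq c jj + (B : ℤ) • yseq c (jj+1) := by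
  have key : ∀ k j, j + k = c.length → 0 ≤ dt m (yseq c j) →
      ∃ jj ≤ c.length, ∃ A B : ℕ, m = (A : ℤ) • yseq c jj + (B : ℤ) • yseq c (jj+1) := by
    intro k
    induction k with
    | zero =>
        intro j hj h1
        have hjt : j = c.length := by omega
        subst hjt
        refine decomp_pair p q c hp hpq hc hval hcop m c.length (le_refl _) h1 ?_
        rw [ylast p q c hp hpq hc hval hcop]
        simp only [dt]
        nlinarith
    | succ k ih =>
        intro j hj h1
        by_cases h : 0 ≤ dt m (yseq c (j+1))
        · exact ih (j+1) (by omega) h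
        · exact decomp_pair p q c hp hpq hc hval hcop m j (by omega) h1 (by omega)
  apply key c.length 0 (by omega)
  have h0 : yseq c 0 = ((0:ℤ), (1:ℤ)) := rfl
  rw [h0]
  simpa [dt] using hm1

end order
end HB


open HB in
/-- Let `x₀ = (0,1), x₁, …, x_{t+1} = (q,−p)` be the minimal generators of
`σ̌ ∩ ℤ²` (for `σ` the cone generated by `(1,0)` and `(p,q)`, `0 < p < q` coprime),
ordered along the boundary (consecutive determinants negative, i.e. clockwise).
Then `xᵢ₋₁ + xᵢ₊₁ = cᵢ xᵢ` for `1 ≤ i ≤ t`, where `(c₁,…,c_t)` is the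
Hirzebruch–Jung expansion of `q/p`. -/
theorem hilbert_basis_relations (p q : ℤ) (hp : 0 < p) (hpq : p < q)
    (hcop : IsCoprime p q)
    (c : List ℤ) (hc : ∀ a ∈ c, 2 ≤ a)
    (hval : hjVal c = (q : ℚ) / (p : ℚ))
    (S : Set (ℤ × ℤ))
    (hS : S = {m : ℤ × ℤ | 0 ≤ m.1 ∧ 0 ≤ p * m.1 + q * m.2})
    (G : Finset (ℤ × ℤ))
    (hGS : (G : Set (ℤ × ℤ)) ⊆ S)
    (hgen : ∀ m ∈ S, genBy G m)
    (hmin : ∀ G' : Finset (ℤ × ℤ), G' ⊂ G → ∃ m ∈ S, ¬ genBy G' m)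
    (x : ℕ → ℤ × ℤ)
    (hx0 : x 0 = (0, 1)) (hxlast : x (c.length + 1) = (q, -p))
    (himage : ∀ m : ℤ × ℤ, m ∈ G ↔ ∃ i ≤ c.length + 1, x i = m)
    (hinj : ∀ i ≤ c.length + 1, ∀ j ≤ c.length + 1, x i = x j → i = j)
    (horder : ∀ i ≤ c.length,
      (x i).1 * (x (i + 1)).2 - (x i).2 * (x (i + 1)).1 < 0) :
    ∀ i, 1 ≤ i → i ≤ c.length →
      x (i - 1) + x (i + 1) = (c.getD (i - 1) 0) • x i := by
  set t := c.length with htdef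
  -- basic facts about S
  have hSiff : ∀ m : ℤ × ℤ, m ∈ S ↔ (0 ≤ m.1 ∧ 0 ≤ p * m.1 + q * m.2) := by
    intro m; rw [hS]; exact Iff.rfl
  have hSadd : ∀ a b : ℤ × ℤ, a ∈ S → b ∈ S → a + b ∈ S := by
    intro a b ha hb
    rw [hSiff] at ha hb ⊢
    obtain ⟨h1, h2⟩ := ha; obtain ⟨h3, h4⟩ := hb
    constructor
    · simp only [Prod.fst_add]; omega
    · have : p * (a + b).1 + q * (a + b).2
          = (p * a.1 + q * a.2) + (p * b.1 + q * b.2) := by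
        simp only [Prod.fst_add, Prod.snd_add]; ring
      omega
  have hS0 : (0 : ℤ × ℤ) ∈ S := by rw [hSiff]; simp
  have hSsmul : ∀ (n : ℕ) (g : ℤ × ℤ), g ∈ S → (n : ℤ) • g ∈ S := by
    intro n
    induction n with
    | zero => intro g _; simpa using hS0
    | succ n ih =>
        intro g hg
        have hrw : ((n + 1 : ℕ) : ℤ) • g = (n : ℤ) • g + g := by
          push_cast; rw [add_smul, one_smul]
        rw [hrw]
        exact hSadd _ _ (ih g hg) hg
  have hSsum : ∀ (F : Finset (ℤ × ℤ)), (∀ g ∈ F, g ∈ S) → ∀ f : (ℤ × ℤ) → ℕ,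
      (∑ g ∈ F, (f g : ℤ) • g) ∈ S := by
    intro F hF f
    exact Finset.sum_induction _ (· ∈ S) hSadd hS0
      (fun g hg => hSsmul (f g) g (hF g hg))
  -- facts about the functional Lf
  have hLadd : ∀ a b : ℤ × ℤ, Lf p q (a + b) = Lf p q a + Lf p q b := by
    intro a b; simp only [Lf, Prod.fst_add, Prod.snd_add]; ring
  have hLsmul : ∀ (k : ℤ) (a : ℤ × ℤ), Lf p q (k • a) = k * Lf p q a := by
    intro k a
    simp only [Lf, Prod.smul_fst, Prod.smul_snd, smul_eq_mul]; ring
  have hLzero : Lf p q 0 = 0 := by simp [Lf]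
  have hLnonneg : ∀ m ∈ S, 0 ≤ Lf p q m := by
    intro m hm; rw [hSiff] at hm; rw [Lf_eq]; omega
  have hLpos : ∀ m ∈ S, m ≠ 0 → 1 ≤ Lf p q m := by
    intro m hm hm0
    rw [hSiff] at hm
    rw [Lf_eq]
    rcases hm with ⟨h1, h2⟩
    by_contra hcon
    have hm1 : m.1 = 0 := by omega
    have hpm : p * m.1 = 0 := by rw [hm1]; ring
    have hq2 : q * m.2 = 0 := by omega
    have hm2 : m.2 = 0 := by
      rcases mul_eq_zero.mp hq2 with h | h
      · omega
      · exact h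
    exact hm0 (Prod.ext hm1 hm2)
  -- genBy lemmas
  have genBy_zero : ∀ F : Finset (ℤ × ℤ), genBy F 0 :=
    fun F => ⟨fun _ => 0, by simp⟩
  have genBy_add : ∀ (F : Finset (ℤ × ℤ)) (a b : ℤ × ℤ),
      genBy F a → genBy F b → genBy F (a + b) := by
    rintro F a b ⟨f1, h1⟩ ⟨f2, h2⟩
    refine ⟨fun g => f1 g + f2 g, ?_⟩
    rw [h1, h2, ← Finset.sum_add_distrib]
    refine Finset.sum_congr rfl (fun g _ => ?_)
    have hcast : ((f1 g + f2 g : ℕ) : ℤ) = (f1 g : ℤ) + (f2 g : ℤ) := by push_cast; ring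
    rw [hcast, add_smul]
  have h0G : (0 : ℤ × ℤ) ∉ G := by
    intro h0
    obtain ⟨m0, hm0S, hm0⟩ := hmin (G.erase 0) (Finset.erase_ssubset h0)
    obtain ⟨f, hf⟩ := hgen m0 hm0S
    exact hm0 ⟨f, by rw [hf]; exact (Finset.sum_erase _ (by simp)).symm⟩
  -- every element of G is irreducible in S
  have hirr : ∀ g ∈ G, ∀ a b : ℤ × ℤ, a ∈ S → b ∈ S → a ≠ 0 → b ≠ 0 → g ≠ a + b := by
    intro g hg a b haS hbS ha0 hb0 heq
    obtain ⟨m0, hm0S, hm0⟩ := hmin (G.erase g) (Finset.erase_ssubset hg)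
    apply hm0
    have claim : ∀ n : ℕ, ∀ m ∈ S, Lf p q m ≤ (n : ℤ) → genBy (G.erase g) m := by
      intro n
      induction n with
      | zero =>
          intro m hm hLm
          have h0 : m = 0 := by
            by_contra hne
            have := hLpos m hm hne; omega
          rw [h0]; exact genBy_zero _
      | succ n ih =>
          intro m hm hLm
          obtain ⟨f, hf⟩ := hgen m hm
          by_cases hfg : f g = 0
          · exact ⟨f, by rw [hf]; exact (Finset.sum_erase _ (by simp [hfg])).symm⟩
          · set r : ℤ × ℤ := ((f g - 1 : ℕ) : ℤ) • g + ∑ g' ∈ G.erase g, (f g' : ℤ) • g'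
              with hrdef
            have hgS : g ∈ S := hGS hg
            have hrS : r ∈ S :=
              hSadd _ _ (hSsmul _ _ hgS)
                (hSsum _ (fun g' hg' => hGS (Finset.mem_of_mem_erase hg')) f)
            have hmgr : m = g + r := by
              rw [hf, ← Finset.add_sum_erase _ _ hg, hrdef]
              have hfg1 : (f g : ℤ) = 1 + ((f g - 1 : ℕ) : ℤ) := by
                have h1 : 1 ≤ f g := Nat.one_le_iff_ne_zero.mpr hfg
                omega
              rw [show (f g : ℤ) • g = g + ((f g - 1 : ℕ) : ℤ) • g by
                rw [hfg1, add_smul, one_smul], add_assoc]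
            have hmabr : m = a + (b + r) := by rw [hmgr, heq, add_assoc]
            have hLmeq : Lf p q m = Lf p q a + Lf p q b + Lf p q r := by
              rw [hmgr, heq, hLadd, hLadd]
            have hLa := hLpos a haS ha0
            have hLb := hLpos b hbS hb0
            have hLr := hLnonneg r hrS
            have ga : genBy (G.erase g) a := ih a haS (by omega)
            have gb : genBy (G.erase g) b := ih b hbS (by omega)
            have gr : genBy (G.erase g) r := ih r hrS (by omega)
            have := genBy_add _ _ _ ga (genBy_add _ _ _ gb gr)
            rwa [← hmabr] at this
    obtain ⟨n, hn⟩ : ∃ n : ℕ, Lf p q m0 ≤ (n : ℤ) := ⟨(Lf p q m0).toNat, Int.self_le_toNat _⟩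
    exact claim n m0 hm0S hn
  -- the yseq elements are in S
  have hymemS : ∀ j ≤ t + 1, yseq c j ∈ S := by
    intro j hj
    rw [hSiff]
    refine ⟨fst_nonneg p q c hp hpq hc hval j hj, ?_⟩
    rcases Nat.lt_or_ge j (t + 1) with h | h
    · have := Upos p q c hp hpq hc hval j (by omega)
      rw [U] at this; omega
    · have hj' : j = t + 1 := by omega
      subst hj'
      have := Ulast p q c hp hpq hc hval
      rw [U] at this
      rw [← htdef] at this
      omega
  have hLy : ∀ j ≤ t + 1, 0 < Lf p q (yseq c j) := Lf_y_pos p q c hp hpq hc hval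
  -- helper: positive combinations are nonzero
  have hne0 : ∀ (n k : ℕ) (u v : ℤ × ℤ), 0 < Lf p q u → 0 < Lf p q v →
      1 ≤ n + k → (n : ℤ) • u + (k : ℤ) • v ≠ 0 := by
    intro n k u v hu hv hnk h0
    have hLval : Lf p q ((n : ℤ) • u + (k : ℤ) • v) = (n : ℤ) * Lf p q u + (k : ℤ) * Lf p q v := by
      rw [hLadd, hLsmul, hLsmul]
    rw [h0, hLzero] at hLval
    rcases Nat.lt_or_ge n 1 with h | h
    · have hk : 1 ≤ k := by omega
      have hk' : (1 : ℤ) ≤ (k : ℤ) := by exact_mod_cast hk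
      have hn' : (n : ℤ) = 0 := by omega
      rw [hn'] at hLval
      nlinarith
    · have hn' : (1 : ℤ) ≤ (n : ℤ) := by exact_mod_cast h
      have h1 : 0 ≤ (k : ℤ) * Lf p q v := by positivity
      nlinarith
  -- G is contained in the image of yseq
  have hGsub : G ⊆ Finset.image (yseq c) (Finset.range (t + 2)) := by
    intro g hg
    have hgS := hGS hg
    have hg0 : g ≠ 0 := fun h => h0G (h ▸ hg)
    have hgS' := (hSiff g).mp hgS
    obtain ⟨j, hj, A, B, hAB⟩ := decomp p q c hp hpq hc hval hcop g hgS'.1 hgS'.2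
    have hYjS := hymemS j (by omega)
    have hYj1S := hymemS (j + 1) (by omega)
    have hLyj := hLy j (by omega)
    have hLyj1 := hLy (j + 1) (by omega)
    have hyj0 : yseq c j ≠ 0 := by
      intro h; rw [h, hLzero] at hLyj; omega
    have hyj10 : yseq c (j + 1) ≠ 0 := by
      intro h; rw [h, hLzero] at hLyj1; omega
    have hAB1 : A + B = 1 := by
      rcases Nat.lt_or_ge (A + B) 2 with h2 | h2
      · -- A + B ≤ 1 ; rule out 0
        by_cases hA0 : A = 0 ∧ B = 0
        · exfalso; apply hg0; rw [hAB, hA0.1, hA0.2]; simp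
        · omega
      · exfalso
        by_cases hA : 1 ≤ A
        · have hsplit : g = yseq c j +
              (((A - 1 : ℕ) : ℤ) • yseq c j + (B : ℤ) • yseq c (j + 1)) := by
            rw [hAB]
            have hA1 : (A : ℤ) = 1 + ((A - 1 : ℕ) : ℤ) := by omega
            rw [hA1, add_smul, one_smul, add_assoc]
          have hbS : (((A - 1 : ℕ) : ℤ) • yseq c j + (B : ℤ) • yseq c (j + 1)) ∈ S :=
            hSadd _ _ (hSsmul _ _ hYjS) (hSsmul _ _ hYj1S)
          have hb0 : (((A - 1 : ℕ) : ℤ) • yseq c j + (B : ℤ) • yseq c (j + 1)) ≠ 0 :=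
            hne0 (A - 1) B _ _ hLyj hLyj1 (by omega)
          exact hirr g hg _ _ hYjS hbS hyj0 hb0 hsplit
        · have hB : 2 ≤ B := by omega
          have hsplit : g = yseq c (j + 1) +
              (((A : ℕ) : ℤ) • yseq c j + ((B - 1 : ℕ) : ℤ) • yseq c (j + 1)) := by
            rw [hAB]
            have hB1 : (B : ℤ) = 1 + ((B - 1 : ℕ) : ℤ) := by omega
            rw [hB1, add_smul, one_smul]
            abel
          have hbS : (((A : ℕ) : ℤ) • yseq c j + ((B - 1 : ℕ) : ℤ) • yseq c (j + 1)) ∈ S :=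
            hSadd _ _ (hSsmul _ _ hYjS) (hSsmul _ _ hYj1S)
          have hb0 : (((A : ℕ) : ℤ) • yseq c j + ((B - 1 : ℕ) : ℤ) • yseq c (j + 1)) ≠ 0 :=
            hne0 A (B - 1) _ _ hLyj hLyj1 (by omega)
          exact hirr g hg _ _ hYj1S hbS hyj10 hb0 hsplit
    -- now g = yseq c j or yseq c (j+1)
    rcases Nat.lt_or_ge A 1 with hA | hA
    · have hA0 : A = 0 := by omega
      have hB1 : B = 1 := by omega
      have : g = yseq c (j + 1) := by rw [hAB, hA0, hB1]; simp
      exact Finset.mem_image.mpr ⟨j + 1, Finset.mem_range.mpr (by omega), this.symm⟩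
    · have hA1 : A = 1 := by omega
      have hB0 : B = 0 := by omega
      have : g = yseq c j := by rw [hAB, hA1, hB0]; simp
      exact Finset.mem_image.mpr ⟨j, Finset.mem_range.mpr (by omega), this.symm⟩
  -- cardinalities
  have hGeq : G = Finset.image x (Finset.range (t + 2)) := by
    ext m
    rw [himage m, Finset.mem_image]
    constructor
    · rintro ⟨i, hi, hxi⟩; exact ⟨i, Finset.mem_range.mpr (by omega), hxi⟩
    · rintro ⟨i, hi, hxi⟩; exact ⟨i, by have := Finset.mem_range.mp hi; omega, hxi⟩
  have hcardG : G.card = t + 2 := by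
    rw [hGeq, Finset.card_image_of_injOn, Finset.card_range]
    intro a ha b hb hab
    exact hinj a (by have := Finset.mem_range.mp ha; omega)
      b (by have := Finset.mem_range.mp hb; omega) hab
  have hcardY : (Finset.image (yseq c) (Finset.range (t + 2))).card = t + 2 := by
    rw [Finset.card_image_of_injOn, Finset.card_range]
    intro a ha b hb hab
    exact y_inj p q c hp hpq hc hval a (by have := Finset.mem_range.mp ha; omega)
      b (by have := Finset.mem_range.mp hb; omega) hab
  have hGY : G = Finset.image (yseq c) (Finset.range (t + 2)) :=
    Finset.eq_of_subset_of_card_le hGsub (by omega)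
  have hLx : ∀ i ≤ t + 1, 0 < Lf p q (x i) := by
    intro i hi
    have hxG : x i ∈ G := (himage _).mpr ⟨i, hi, rfl⟩
    have := hLpos (x i) (hGS hxG) (fun h => h0G (h ▸ hxG))
    omega
  have hxchain : ∀ b ≤ t + 1, ∀ a < b, dt (x a) (x b) < 0 := by
    intro b
    induction b with
    | zero => intro _ a ha; omega
    | succ b ih =>
        intro hb a ha
        rcases Nat.eq_or_lt_of_le (Nat.le_of_lt_succ ha) with h | h
        · subst h
          exact horder a (by omega)
        · exact dt_trans p q (x a) (x b) (x (b + 1)) (hLx a (by omega)) (hLx b (by omega))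
            (hLx (b + 1) hb) (ih (by omega) a h) (horder b (by omega))
  have hxy : ∀ i ≤ t + 1, ∀ k ≤ i, x k = yseq c k := by
    intro i
    induction i with
    | zero =>
        intro _ k hk
        have hk0 : k = 0 := by omega
        subst hk0
        rw [hx0]; rfl
    | succ i ih =>
        intro hi k hk
        rcases Nat.lt_or_ge k (i + 1) with hki | hki
        · exact ih (by omega) k (by omega)
        · have hk1 : k = i + 1 := by omega
          subst hk1
          have hmem : x (i + 1) ∈ Finset.image (yseq c) (Finset.range (t + 2)) := by
            rw [← hGY]; exact (himage _).mpr ⟨i + 1, hi, rfl⟩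
          obtain ⟨j, hjr, hj⟩ := Finset.mem_image.mp hmem
          have hjr' : j ≤ t + 1 := by have := Finset.mem_range.mp hjr; omega
          have hjge : i + 1 ≤ j := by
            by_contra h
            have hji : j ≤ i := by omega
            have hxj := ih (by omega) j hji
            have : x (i + 1) = x j := by rw [hxj]; exact hj.symm
            have := hinj (i + 1) hi j (by omega) this
            omega
          rcases Nat.eq_or_lt_of_le hjge with hje | hjlt
          · rw [← hje] at hj; exact hj.symm
          · exfalso
            have hymem : yseq c (i + 1) ∈ G := by
              rw [hGY]
              exact Finset.mem_image.mpr ⟨i + 1, Finset.mem_range.mpr (by omega), rfl⟩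
            obtain ⟨k', hk'1, hk'2⟩ := (himage _).mp hymem
            have hk'ge : i + 1 ≤ k' := by
              by_contra h
              have hki' : k' ≤ i := by omega
              have := ih (by omega) k' hki'
              rw [this] at hk'2
              have := y_inj p q c hp hpq hc hval k' (by omega) (i + 1) (by omega) hk'2
              omega
            have hk'ne : k' ≠ i + 1 := by
              intro h
              subst h
              have hj' := hj.trans hk'2
              have := y_inj p q c hp hpq hc hval j hjr' (i + 1) (by omega) hj'
              omega
            have hdtx : dt (x (i + 1)) (x k') < 0 := hxchain k' hk'1 (i + 1) (by omega)
            rw [← hj, hk'2] at hdtx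
            have h2 := dt_lt p q c hp hpq hc hval j hjr' (i + 1) hjlt
            have hanti : dt (yseq c (i + 1)) (yseq c j) = -dt (yseq c j) (yseq c (i + 1)) := by
              simp only [dt]; ring
            omega
  intro i hi1 hi2
  have e1 : x (i - 1) = yseq c (i - 1) := hxy (t + 1) (le_refl _) (i - 1) (by omega)
  have e2 : x i = yseq c i := hxy (t + 1) (le_refl _) i (by omega)
  have e3 : x (i + 1) = yseq c (i + 1) := hxy (t + 1) (le_refl _) (i + 1) (by omega)
  rw [e1, e2, e3]
  have hrec := yseq_rec c (i - 1)
  rw [show i - 1 + 2 = i + 1 from by omega, show i - 1 + 1 = i from by omega] at hrec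
  rw [hrec]
  abel
end
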